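/- arXiv:1408.3074 — 6 statements merged into one kernel-verified Lean document; each statement's English description precedes it below -/
import Mathlib

section
/- Let G be a simple graph without isolated vertices and let f be an IASI of G. Then f is a weak IASI if and only if for every edge uv of G at least one of the set-labels f(u), f(v) is a singleton. -/
open Pointwise

/-- The induced set-label on (potential) edges: the sumset of the end-vertex labels. -/
def edgeLabel {V : Type*} (f : V → Finset ℕ) : Sym2 V → Finset ℕ :=
  Sym2.lift ⟨fun u v => f u + f v, fun u v => add_comm (f u) (f v)⟩

/-- An integer additive set-indexer (IASI) of a simple graph `G`: an injective assignment
of nonempty finite sets of non-negative integers to the vertices such that the induced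
sumset-labeling of the edges is also injective. -/
structure IsIASI {V : Type*} (G : SimpleGraph V) (f : V → Finset ℕ) : Prop where
  nonempty : ∀ v, (f v).Nonempty
  inj : Function.Injective f
  edgeInj : Set.InjOn (edgeLabel f) G.edgeSet

/-- A weak IASI: an IASI for which every edge label has cardinality equal to the maximum of
the cardinalities of the labels of its end vertices. -/
structure IsWeakIASI {V : Type*} (G : SimpleGraph V) (f : V → Finset ℕ) extends
    IsIASI G f : Prop where
  weak : ∀ ⦃u v⦄, G.Adj u v → (f u + f v).card = max (f u).card (f v).card

/-- The number of mono-indexed edges of `G` under the labeling `f`, i.e. the number of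
edges whose set-label is a singleton. -/
noncomputable def monoEdgeCount {V : Type*} (G : SimpleGraph V) (f : V → Finset ℕ) : ℕ :=
  {e ∈ G.edgeSet | (edgeLabel f e).card = 1}.ncard

/-- The sparing number of `G`: the minimum number of mono-indexed edges taken over all
weak IASIs of `G`. -/
noncomputable def sparingNumber {V : Type*} (G : SimpleGraph V) : ℕ :=
  sInf {k | ∃ f : V → Finset ℕ, IsWeakIASI G f ∧ monoEdgeCount G f = k}

namespace Finset

variable {α : Type*} [LinearOrder α] [Add α] [IsCancelAdd α] [AddLeftMono α] [AddRightMono α]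
  {s t : Finset α}

/-- By Cauchy–Davenport, `#(s + t) ≥ #s + #t - 1`, which exceeds `max #s #t` as soon as both
sets have at least two elements. -/
theorem card_add_eq_max_iff (hs : s.Nonempty) (ht : t.Nonempty) :
    #(s + t) = max #s #t ↔ #s = 1 ∨ #t = 1 := by
  constructor
  · intro h
    by_contra! hne
    have hsum := h ▸ cauchy_davenport_add_of_linearOrder_isCancelAdd hs ht
    have := hs.card_pos
    have := ht.card_pos
    omega
  · rintro (hs₁ | ht₁)
    · obtain ⟨a, rfl⟩ := card_eq_one.1 hs₁
      simpa using ht.card_pos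
    · obtain ⟨a, rfl⟩ := card_eq_one.1 ht₁
      simpa using hs.card_pos

end Finset

theorem isWeakIASI_iff_singleton_end_general {V : Type*} (G : SimpleGraph V)
    (f : V → Finset ℕ) (hf : IsIASI G f) :
    IsWeakIASI G f ↔ ∀ ⦃u v⦄, G.Adj u v → (f u).card = 1 ∨ (f v).card = 1 := by
  have card_add_iff (u v : V) := Finset.card_add_eq_max_iff (hf.nonempty u) (hf.nonempty v)
  constructor
  · exact fun hw u v huv => (card_add_iff u v).1 (hw.weak huv)
  · exact fun h => ⟨hf, fun u v huv => (card_add_iff u v).2 (h huv)⟩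

/-- For a graph `G` without isolated vertices and an IASI `f` of `G`, `f` is a weak IASI
if and only if every edge of `G` has at least one end vertex with a singleton set-label. -/
theorem isWeakIASI_iff_singleton_end {V : Type*} (G : SimpleGraph V)
    (hiso : ∀ v : V, ∃ u, G.Adj v u) (f : V → Finset ℕ) (hf : IsIASI G f) :
    IsWeakIASI G f ↔ ∀ ⦃u v⦄, G.Adj u v → (f u).card = 1 ∨ (f v).card = 1 :=
  isWeakIASI_iff_singleton_end_general G f hf
end

section
/- Let G be a connected simple graph admitting a weak IASI f. Then G is bipartite or G has at least one edge that is mono-indexed under f. -/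
open Pointwise

open Finset

/- By Cauchy–Davenport, `#(A + B) ≥ #A + #B - 1` for nonempty finite sets of naturals, so
`#(A + B) = max #A #B` forces `A` or `B` to be a singleton. Hence, if no edge is mono-indexed,
exactly one end of every edge is, and being mono-indexed is a proper 2-colouring. -/

theorem Finset.card_eq_one_or_card_eq_one_of_card_add_eq_max {α : Type*} [LinearOrder α] [Add α]
    [IsCancelAdd α] [AddLeftMono α] [AddRightMono α] {s t : Finset α} (hs : s.Nonempty)
    (ht : t.Nonempty) (h : #(s + t) = max #s #t) : #s = 1 ∨ #t = 1 := by
  have := cauchy_davenport_add_of_linearOrder_isCancelAdd hs ht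
  have := hs.card_pos
  have := ht.card_pos
  omega

theorem IsWeakIASI.card_add_eq_one {V : Type*} {G : SimpleGraph V} {f : V → Finset ℕ}
    (hf : IsWeakIASI G f) {u v : V} (huv : G.Adj u v) (h : #(f u) = 1 ↔ #(f v) = 1) :
    #(f u + f v) = 1 := by
  rw [hf.weak huv]
  rcases card_eq_one_or_card_eq_one_of_card_add_eq_max (hf.nonempty u) (hf.nonempty v)
    (hf.weak huv) with hu | hv
  · rw [hu, h.1 hu, max_self]
  · rw [hv, h.2 hv, max_self]

theorem bipartite_or_exists_monoIndexed_edge_general {V : Type*} (G : SimpleGraph V)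
    (f : V → Finset ℕ) (hf : IsWeakIASI G f) :
    G.Colorable 2 ∨ ∃ u v, G.Adj u v ∧ (f u + f v).card = 1 := by
  refine or_iff_not_imp_right.2 fun hmono => ?_
  let c : G.Coloring Prop :=
    SimpleGraph.Coloring.mk (fun v => #(f v) = 1) fun {u v} huv heq =>
      hmono ⟨u, v, huv, hf.card_add_eq_one huv (Iff.of_eq heq)⟩
  exact Fintype.card_prop ▸ c.colorable

/-- If a connected graph `G` admits a weak IASI `f`, then `G` is bipartite
(i.e. 2-colorable) or `G` has at least one mono-indexed edge under `f`. -/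
theorem bipartite_or_exists_monoIndexed_edge {V : Type*} (G : SimpleGraph V)
    (hconn : G.Connected) (f : V → Finset ℕ) (hf : IsWeakIASI G f) :
    G.Colorable 2 ∨ ∃ u v, G.Adj u v ∧ (f u + f v).card = 1 :=
  bipartite_or_exists_monoIndexed_edge_general G f hf
end

section
/- Let C_n be the cycle on n vertices (n ≥ 3) and let f be a weak IASI of C_n. If n is odd, then the number of edges of C_n that are mono-indexed under f is odd; if n is even, then the number of mono-indexed edges is even. -/
open Pointwise

/-
A sumset in a linearly ordered cancellative monoid has at least `|A| + |B| - 1` elements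
(Cauchy–Davenport), so on an edge of a weak IASI at least one end vertex is mono-indexed, and the
edge is mono-indexed exactly when both are. Going around the cycle, the edges that are not
mono-indexed are therefore the two edges at each of the `k` vertices that are not mono-indexed,
and these `2k` edges are distinct. Hence `n - 2k` edges are mono-indexed.
-/

open Finset

namespace Finset

theorem card_eq_one_or_card_eq_one_of_card_add_eq_max_s4 {α : Type*} [LinearOrder α] [Add α]
    [IsCancelAdd α] [AddLeftMono α] [AddRightMono α] {A B : Finset α} (hA : A.Nonempty)
    (hB : B.Nonempty) (h : #(A + B) = max #A #B) : #A = 1 ∨ #B = 1 := by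
  have := cauchy_davenport_add_of_linearOrder_isCancelAdd hA hB
  have := hA.card_pos
  have := hB.card_pos
  omega

theorem card_filter_and_perm_add_two_mul {α : Type*} [Fintype α] (σ : Equiv.Perm α)
    (p : α → Prop) [DecidablePred p] (h : ∀ a, p a ∨ p (σ a)) :
    #{a | p a ∧ p (σ a)} + 2 * #{a | ¬p a} = Fintype.card α := by
  classical
  have hshift : #{a | ¬p (σ a)} = #{a | ¬p a} :=
    card_nbij' σ σ.symm (fun a ha => by simpa using ha) (fun a ha => by simpa using ha)
      (fun a _ => σ.symm_apply_apply a) (fun a _ => σ.apply_symm_apply a)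
  have hdisj : Disjoint ({a | ¬p a} : Finset α) ({a | ¬p (σ a)} : Finset α) :=
    disjoint_filter.2 fun a _ ha hσa => (h a).elim ha hσa
  have hcompl : ({a | ¬(p a ∧ p (σ a))} : Finset α) =
      ({a | ¬p a} : Finset α) ∪ ({a | ¬p (σ a)} : Finset α) := by
    rw [← filter_or]
    exact filter_congr fun a _ => not_and_or
  calc #{a | p a ∧ p (σ a)} + 2 * #{a | ¬p a}
      = #{a | p a ∧ p (σ a)} + #{a | ¬(p a ∧ p (σ a))} := by
        rw [hcompl, card_union_of_disjoint hdisj, hshift, two_mul]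
    _ = Fintype.card α := card_filter_add_card_filter_not _

end Finset

theorem Fin.injective_sym2_mk_add_one {n : ℕ} :
    Function.Injective fun i : Fin (n + 3) => s(i, i + 1) := by
  intro i j hij
  rcases Sym2.eq_iff.1 hij with ⟨h, -⟩ | ⟨rfl, h⟩
  · exact h
  · have : (1 + 1 : Fin (n + 3)) = 0 :=
      add_left_cancel (a := j) <| by rw [← add_assoc, h, add_zero]
    have h2 := congrArg Fin.val this
    rw [Fin.val_add, Fin.val_one, Fin.val_zero, Nat.mod_eq_of_lt (by omega)] at h2
    omega

namespace IsWeakIASI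

variable {V : Type*} {G : SimpleGraph V} {f : V → Finset ℕ} {u v : V}

theorem card_eq_one_or_card_eq_one (hf : IsWeakIASI G f) (h : G.Adj u v) :
    #(f u) = 1 ∨ #(f v) = 1 :=
  card_eq_one_or_card_eq_one_of_card_add_eq_max_s4 (hf.nonempty u) (hf.nonempty v) (hf.weak h)

theorem card_add_eq_one_iff (hf : IsWeakIASI G f) (h : G.Adj u v) :
    #(f u + f v) = 1 ↔ #(f u) = 1 ∧ #(f v) = 1 := by
  have := (hf.nonempty u).card_pos
  have := (hf.nonempty v).card_pos
  rw [hf.weak h]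
  omega

end IsWeakIASI

namespace SimpleGraph

theorem cycleGraph_adj_iff_eq_add_one {n : ℕ} {u v : Fin (n + 2)} :
    (cycleGraph (n + 2)).Adj u v ↔ u = v + 1 ∨ v = u + 1 := by
  rw [cycleGraph_adj, sub_eq_iff_eq_add', sub_eq_iff_eq_add']

theorem cycleGraph_edgeSet {n : ℕ} :
    (cycleGraph (n + 2)).edgeSet = Set.range fun i => s(i, i + 1) := by
  ext e
  induction e with
  | h u v =>
    simp only [mem_edgeSet, cycleGraph_adj_iff_eq_add_one, Set.mem_range, Sym2.eq_iff]
    constructor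
    · rintro (rfl | rfl)
      exacts [⟨v, .inr ⟨rfl, rfl⟩⟩, ⟨u, .inl ⟨rfl, rfl⟩⟩]
    · rintro ⟨i, (⟨rfl, rfl⟩ | ⟨rfl, rfl⟩)⟩
      exacts [.inr rfl, .inl rfl]

theorem ncard_setOf_mem_edgeSet_cycleGraph {n : ℕ} (p : Sym2 (Fin (n + 3)) → Prop)
    [DecidablePred p] :
    {e ∈ (cycleGraph (n + 3)).edgeSet | p e}.ncard = #{i | p s(i, i + 1)} := by
  have himage : {e ∈ (cycleGraph (n + 3)).edgeSet | p e} =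
      (fun i => s(i, i + 1)) '' ↑({i | p s(i, i + 1)} : Finset (Fin (n + 3))) := by
    ext e
    simp only [cycleGraph_edgeSet, Set.mem_range, Set.mem_ofPred_eq, coe_filter, mem_univ,
      true_and, Set.mem_image]
    constructor
    · rintro ⟨⟨i, rfl⟩, hp⟩
      exact ⟨i, hp, rfl⟩
    · rintro ⟨i, hp, rfl⟩
      exact ⟨⟨i, rfl⟩, hp⟩
  rw [himage, Set.ncard_image_of_injective _ Fin.injective_sym2_mk_add_one, Set.ncard_coe_finset]

end SimpleGraph

/-- Let `f` be a weak IASI of the cycle `C n` (`n ≥ 3`). If `n` is odd, the number of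
mono-indexed edges is odd; if `n` is even, the number of mono-indexed edges is even. -/
theorem cycle_monoEdgeCount_parity (n : ℕ) (hn : 3 ≤ n) (f : Fin n → Finset ℕ)
    (hf : IsWeakIASI (SimpleGraph.cycleGraph n) f) :
    (Odd n → Odd (monoEdgeCount (SimpleGraph.cycleGraph n) f)) ∧
    (Even n → Even (monoEdgeCount (SimpleGraph.cycleGraph n) f)) := by
  obtain ⟨m, rfl⟩ := Nat.exists_eq_add_of_le' hn
  have hadj (i : Fin (m + 3)) : (SimpleGraph.cycleGraph (m + 3)).Adj i (i + 1) :=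
    SimpleGraph.cycleGraph_adj_iff_eq_add_one.2 (.inr rfl)
  have hcount : monoEdgeCount (SimpleGraph.cycleGraph (m + 3)) f =
      #{i | #(f i) = 1 ∧ #(f (i + 1)) = 1} := by
    rw [monoEdgeCount, SimpleGraph.ncard_setOf_mem_edgeSet_cycleGraph]
    exact congrArg card <| filter_congr fun i _ => hf.card_add_eq_one_iff (hadj i)
  have hsum : #{i | #(f i) = 1 ∧ #(f (i + 1)) = 1} + 2 * #{i | #(f i) ≠ 1} = m + 3 :=
    (card_filter_and_perm_add_two_mul (Equiv.addRight 1) _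
      fun i => hf.card_eq_one_or_card_eq_one (hadj i)).trans (Fintype.card_fin _)
  rw [hcount]
  constructor <;> intro h <;> rw [← hsum] at h <;> simpa [parity_simps] using h
end

section
/- Let G₁, G₂, …, G_k be simple graphs on pairwise disjoint vertex sets, each without isolated vertices, and let f be an IASI of the join G₁ + G₂ + ⋯ + G_k. Then f is a weak IASI of the join if and only if the restriction of f to each G_i is a weak IASI and at most one of the graphs G_i contains a vertex whose set-label is not a singleton (i.e., all the G_i except possibly one are labeled 1-uniformly by f). -/
open Pointwise

/-- The join `G₀ + G₁ + ⋯ + G_{k-1}` of a family of graphs on pairwise disjoint vertex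
sets. The disjoint vertex sets are encoded by a partition map `p : V → Fin k`, the graph
`G i` living on the part `p ⁻¹' {i}`; two vertices are adjacent in the join iff they lie
in different parts, or they are adjacent in one of the `G i`. -/
def joinFamily {V : Type*} {k : ℕ} (p : V → Fin k) (G : Fin k → SimpleGraph V) :
    SimpleGraph V where
  Adj u v := p u ≠ p v ∨ ∃ i, (G i).Adj u v
  symm := by
    constructor
    intro u v h
    rcases h with h | ⟨i, h⟩
    · exact Or.inl h.symm
    · exact Or.inr ⟨i, h.symm⟩
  loopless := by
    constructor
    intro v h
    rcases h with h | ⟨i, h⟩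
    · exact h rfl
    · exact (G i).irrefl h

/-- If neither set is a singleton, Cauchy–Davenport gives `#(A + B) ≥ #A + #B - 1 > max #A #B`. -/
theorem Finset.card_add_eq_max_iff_s7 {α : Type*} [LinearOrder α] [Add α]
    [IsCancelAdd α] [AddLeftMono α] [AddRightMono α] {A B : Finset α}
    (hA : A.Nonempty) (hB : B.Nonempty) :
    (A + B).card = max A.card B.card ↔ A.card = 1 ∨ B.card = 1 := by
  constructor
  · intro h
    by_contra! hc
    have hlower : A.card + B.card - 1 ≤ (A + B).card :=
      cauchy_davenport_add_of_linearOrder_isCancelAdd hA hB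
    have hA2 : 2 ≤ A.card := by have := hA.card_pos; omega
    have hB2 : 2 ≤ B.card := by have := hB.card_pos; omega
    omega
  · rintro (h | h)
    · obtain ⟨a, rfl⟩ := Finset.card_eq_one.mp h
      rw [Finset.card_singleton_add, Finset.card_singleton, max_eq_right hB.card_pos]
    · obtain ⟨b, rfl⟩ := Finset.card_eq_one.mp h
      rw [Finset.card_add_singleton, Finset.card_singleton, max_eq_left hA.card_pos]

theorem IsIASI.mono {V : Type*} {G H : SimpleGraph V} {f : V → Finset ℕ} (hHG : H ≤ G)
    (hf : IsIASI G f) : IsIASI H f :=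
  ⟨hf.nonempty, hf.inj, hf.edgeInj.mono (SimpleGraph.edgeSet_mono hHG)⟩

theorem IsWeakIASI.mono {V : Type*} {G H : SimpleGraph V} {f : V → Finset ℕ} (hHG : H ≤ G)
    (hf : IsWeakIASI G f) : IsWeakIASI H f :=
  { hf.toIsIASI.mono hHG with weak := fun _ _ h => hf.weak (hHG h) }

theorem le_joinFamily {V : Type*} {k : ℕ} (p : V → Fin k) (G : Fin k → SimpleGraph V)
    (i : Fin k) : G i ≤ joinFamily p G :=
  fun _ _ h => Or.inr ⟨i, h⟩

theorem isWeakIASI_joinFamily_iff_general {V : Type*} {k : ℕ} (p : V → Fin k)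
    (G : Fin k → SimpleGraph V)
    (f : V → Finset ℕ) (hf : IsIASI (joinFamily p G) f) :
    IsWeakIASI (joinFamily p G) f ↔
      (∀ i, IsWeakIASI (G i) f) ∧
        {i : Fin k | ∃ v, p v = i ∧ (f v).card ≠ 1}.Subsingleton := by
  have weak_iff (u v : V) : (f u + f v).card = max (f u).card (f v).card ↔
      (f u).card = 1 ∨ (f v).card = 1 :=
    Finset.card_add_eq_max_iff_s7 (hf.nonempty u) (hf.nonempty v)
  constructor
  · intro hw
    refine ⟨fun i => hw.mono (le_joinFamily p G i), ?_⟩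
    rintro _ ⟨u, rfl, hu⟩ _ ⟨v, rfl, hv⟩
    by_contra hne
    exact ((weak_iff u v).mp (hw.weak (Or.inl hne))).elim hu hv
  · rintro ⟨hparts, hsub⟩
    refine { hf with weak := ?_ }
    rintro u v (hne | ⟨i, hi⟩)
    · refine (weak_iff u v).mpr ?_
      by_contra! hc
      exact hne (hsub ⟨u, rfl, hc.1⟩ ⟨v, rfl, hc.2⟩)
    · exact (hparts i).weak hi

/-- Let `G₀, …, G_{k-1}` be graphs on pairwise disjoint vertex sets (each `G i` having
its edges inside its own part `p ⁻¹' {i}`), each without isolated vertices, and let `f`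
be an IASI of their join. Then `f` is a weak IASI of the join if and only if the
restriction of `f` to each `G i` is a weak IASI and at most one of the graphs contains
a vertex whose set-label is not a singleton. -/
theorem isWeakIASI_joinFamily_iff {V : Type*} {k : ℕ} (p : V → Fin k)
    (G : Fin k → SimpleGraph V)
    (hpart : ∀ i, ∀ ⦃u v : V⦄, (G i).Adj u v → p u = i ∧ p v = i)
    (hiso : ∀ v : V, ∃ u, (G (p v)).Adj v u)
    (f : V → Finset ℕ) (hf : IsIASI (joinFamily p G) f) :
    IsWeakIASI (joinFamily p G) f ↔
      (∀ i, IsWeakIASI (G i) f) ∧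
        {i : Fin k | ∃ v, p v = i ∧ (f v).card ≠ 1}.Subsingleton :=
  isWeakIASI_joinFamily_iff_general p G f hf
end

section
/- For integers m, n > 1, the sparing number of the (m,n)-fan graph F_{m,n} = P_n + K̄_m is φ(F_{m,n}) = n, where P_n denotes the path of length n (with n edges). -/
open Pointwise

/-- The join `G + H` of two graphs on disjoint vertex sets: all vertices and edges of
`G` and `H`, together with every edge joining a vertex of `G` to a vertex of `H`. -/
def graphJoin {V W : Type*} (G : SimpleGraph V) (H : SimpleGraph W) :
    SimpleGraph (V ⊕ W) where
  Adj x y :=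
    match x, y with
    | Sum.inl a, Sum.inl b => G.Adj a b
    | Sum.inr a, Sum.inr b => H.Adj a b
    | Sum.inl _, Sum.inr _ => True
    | Sum.inr _, Sum.inl _ => True
  symm := by
    constructor
    rintro (a | a) (b | b) h
    · exact G.adj_symm h
    · trivial
    · trivial
    · exact H.adj_symm h
  loopless := by
    constructor
    rintro (a | a) h
    · exact G.irrefl h
    · exact H.irrefl h

/-!
By Cauchy–Davenport, `|A + B| = max |A| |B|` forces `A` or `B` to be a singleton, so every edge
of a weak IASI has a mono-indexed end. If some vertex of `K̄_m` is not mono-indexed, all path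
vertices are, and then so are the `n` path edges. Otherwise the mono-indexed ends of the path
edges, joined alternately to two vertices of `K̄_m`, give `n` distinct mono-indexed edges.
Conversely, labelling the path vertices by singletons `{i}` and the vertices of `K̄_m` by
`{(n + 1) j, (n + 1) j + 1}` gives a weak IASI whose mono-indexed edges are exactly the path edges.
-/

open Finset SimpleGraph

namespace Finset

section Cancel

variable {α : Type*} [DecidableEq α] [Add α] [IsCancelAdd α] {s t : Finset α}

theorem card_add_eq_one_iff (hs : s.Nonempty) (ht : t.Nonempty) :
    #(s + t) = 1 ↔ #s = 1 ∧ #t = 1 := by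
  refine ⟨fun h => ?_, fun ⟨hs1, ht1⟩ => ?_⟩
  · have := card_le_card_add_left (t := t) hs
    have := card_le_card_add_right (s := s) ht
    have := hs.card_pos
    have := ht.card_pos
    omega
  · obtain ⟨a, rfl⟩ := card_eq_one.mp hs1
    obtain ⟨b, rfl⟩ := card_eq_one.mp ht1
    rw [singleton_add_singleton, card_singleton]

theorem card_add_eq_max_of_card_eq_one (hs : #s = 1) (ht : t.Nonempty) :
    #(s + t) = max #s #t := by
  obtain ⟨a, rfl⟩ := card_eq_one.mp hs
  rw [card_singleton_add, card_singleton, max_eq_right ht.card_pos]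

end Cancel

-- Outside `Cancel`: the sumset here must use the `DecidableEq` instance of the `LinearOrder`.
theorem card_eq_one_or_card_eq_one_of_card_add_eq_max_s8 {α : Type*} [LinearOrder α] [Add α]
    [IsCancelAdd α] [AddLeftMono α] [AddRightMono α] {s t : Finset α} (hs : s.Nonempty)
    (ht : t.Nonempty) (h : #(s + t) = max #s #t) : #s = 1 ∨ #t = 1 := by
  have := cauchy_davenport_add_of_linearOrder_isCancelAdd hs ht
  have := hs.card_pos
  have := ht.card_pos
  omega

theorem sum_pair_succ (x : ℕ) : ∑ z ∈ {x, x + 1}, z = 2 * x + 1 := by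
  rw [sum_pair (by omega)]
  ring

theorem singleton_add_pair_succ (a x : ℕ) :
    ({a} : Finset ℕ) + {x, x + 1} = {a + x, a + x + 1} := by
  simp [singleton_add, vadd_finset_insert, add_assoc]

end Finset

section IASI

variable {V : Type*} {G : SimpleGraph V} {f : V → Finset ℕ}

@[simp] theorem edgeLabel_mk (u v : V) : edgeLabel f s(u, v) = f u + f v := rfl

theorem card_edgeLabel_eq_one_iff (hf : ∀ v, (f v).Nonempty) (e : Sym2 V) :
    #(edgeLabel f e) = 1 ↔ ∀ v ∈ e, #(f v) = 1 := by
  induction e using Sym2.ind with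
  | _ u v => simp [card_add_eq_one_iff (hf u) (hf v)]

theorem IsWeakIASI.card_eq_one_or (hf : IsWeakIASI G f) {u v : V} (h : G.Adj u v) :
    #(f u) = 1 ∨ #(f v) = 1 :=
  card_eq_one_or_card_eq_one_of_card_add_eq_max_s8 (hf.nonempty u) (hf.nonempty v) (hf.weak h)

theorem sparingNumber_eq_of_isWeakIASI {k : ℕ} (hf : IsWeakIASI G f) (hk : monoEdgeCount G f = k)
    (hle : ∀ g, IsWeakIASI G g → k ≤ monoEdgeCount G g) : sparingNumber G = k :=
  le_antisymm (Nat.sInf_le ⟨f, hf, hk⟩)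
    (le_csInf ⟨k, f, hf, hk⟩ fun _ ⟨g, hg, hg'⟩ => hg' ▸ hle g hg)

end IASI

section graphJoin

variable {V W : Type*} {G : SimpleGraph V} {H : SimpleGraph W}

@[simp] theorem graphJoin_adj_inl_inl {a b : V} :
    (graphJoin G H).Adj (.inl a) (.inl b) ↔ G.Adj a b := Iff.rfl

@[simp] theorem graphJoin_adj_inl_inr (a : V) (b : W) : (graphJoin G H).Adj (.inl a) (.inr b) :=
  trivial

theorem map_inl_image_edgeSet_graphJoin :
    Sym2.map Sum.inl '' G.edgeSet =
      {e ∈ (graphJoin G H).edgeSet | ∀ x ∈ e, x.isLeft} := by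
  ext e
  constructor
  · rintro ⟨e, he, rfl⟩
    induction e using Sym2.ind with
    | _ a b => simpa using he
  · induction e using Sym2.ind with
    | _ u v =>
      rcases u with a | a <;> rcases v with b | b <;> simp
      · exact fun h => ⟨s(a, b), h, rfl⟩
      · exact fun _ h => absurd (h a) (by simp)

end graphJoin

theorem SimpleGraph.ncard_edgeSet_pathGraph (n : ℕ) : (pathGraph (n + 1)).edgeSet.ncard = n := by
  have hrange :
      (pathGraph (n + 1)).edgeSet = Set.range fun i : Fin n => s(i.castSucc, i.succ) := by
    ext e
    induction e using Sym2.ind with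
    | _ u v =>
      simp only [mem_edgeSet, pathGraph_adj, Set.mem_range, Sym2.eq_iff, Fin.ext_iff,
        Fin.val_castSucc, Fin.val_succ]
      constructor
      · rintro (h | h)
        · exact ⟨⟨u, by omega⟩, .inl ⟨rfl, h⟩⟩
        · exact ⟨⟨v, by omega⟩, .inr ⟨rfl, h⟩⟩
      · rintro ⟨i, h | h⟩ <;> omega
  rw [hrange, Set.ncard_range_of_injective, Nat.card_fin]
  intro i j h
  simp only [Sym2.eq_iff, Fin.ext_iff, Fin.val_castSucc, Fin.val_succ] at h
  omega

section LowerBound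

variable {V W : Type*} [Finite V] [Finite W] {G : SimpleGraph V} {H : SimpleGraph W}
  {f : V ⊕ W → Finset ℕ}

theorem ncard_edgeSet_le_monoEdgeCount_graphJoin (hf : IsWeakIASI (graphJoin G H) f) {w : W}
    (hw : #(f (.inr w)) ≠ 1) : G.edgeSet.ncard ≤ monoEdgeCount (graphJoin G H) f := by
  have hmono : ∀ v, #(f (.inl v)) = 1 := fun v =>
    (hf.card_eq_one_or (graphJoin_adj_inl_inr v w)).resolve_right hw
  rw [← Set.ncard_image_of_injective _ (Sym2.map.injective Sum.inl_injective),
    map_inl_image_edgeSet_graphJoin (H := H)]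
  refine Set.ncard_le_ncard (fun e ⟨he, hleft⟩ => ⟨he, ?_⟩) (Set.toFinite _)
  rw [card_edgeLabel_eq_one_iff hf.nonempty]
  intro x hx
  obtain ⟨v, rfl⟩ := Sum.isLeft_iff.mp (hleft x hx)
  exact hmono v

theorem le_monoEdgeCount_pathGraph_graphJoin {n : ℕ} {f : Fin (n + 1) ⊕ W → Finset ℕ}
    (hf : IsWeakIASI (graphJoin (pathGraph (n + 1)) H) f) {w₀ w₁ : W} (hw : w₀ ≠ w₁)
    (h₀ : #(f (.inr w₀)) = 1) (h₁ : #(f (.inr w₁)) = 1) :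
    n ≤ monoEdgeCount (graphJoin (pathGraph (n + 1)) H) f := by
  have hend (i : Fin n) :
      ∃ u : Fin (n + 1), (u.val = i.val ∨ u.val = i.val + 1) ∧ #(f (.inl u)) = 1 := by
    have hadj : (pathGraph (n + 1)).Adj i.castSucc i.succ := by simp [pathGraph_adj]
    rcases hf.card_eq_one_or (graphJoin_adj_inl_inl.mpr hadj) with h | h
    · exact ⟨_, .inl rfl, h⟩
    · exact ⟨_, .inr rfl, h⟩
  choose u hu hmono using hend
  -- `u i = u j` forces `|i - j| ≤ 1`, so choosing `w₀` or `w₁` by parity separates the edges.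
  let w (i : Fin n) : W := if i.val % 2 = 0 then w₀ else w₁
  have hw_mono (i : Fin n) : #(f (.inr (w i))) = 1 := by
    unfold w; split_ifs <;> assumption
  let e (i : Fin n) : Sym2 (Fin (n + 1) ⊕ W) := s(.inl (u i), .inr (w i))
  have hinj : Set.InjOn e Set.univ := by
    intro i _ j _ h
    simp only [e, Sym2.eq_iff, Sum.inl.injEq, Sum.inr.injEq, reduceCtorEq, and_false, or_false] at h
    have hij : i.val % 2 = j.val % 2 := by
      unfold w at h
      split_ifs at h <;> first | omega | exact absurd h.2 hw | exact absurd h.2.symm hw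
    have := hu i
    have := hu j
    exact Fin.ext (by rw [Fin.ext_iff] at h; omega)
  have hmem (i : Fin n) :
      e i ∈ {e ∈ (graphJoin (pathGraph (n + 1)) H).edgeSet | #(edgeLabel f e) = 1} :=
    ⟨graphJoin_adj_inl_inr (G := pathGraph (n + 1)) (H := H) (u i) (w i),
      (card_edgeLabel_eq_one_iff hf.nonempty _).mpr (by simp [e, hmono, hw_mono])⟩
  simpa [monoEdgeCount] using Set.ncard_le_ncard_of_injOn e (fun i _ => hmem i) hinj

end LowerBound

section UpperBound

variable (m n : ℕ)

def fanLabel : Fin (n + 1) ⊕ Fin m → Finset ℕ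
  | .inl i => {i.val}
  | .inr j => {(n + 1) * j.val, (n + 1) * j.val + 1}

theorem card_fanLabel_eq_one_iff (v : Fin (n + 1) ⊕ Fin m) :
    #(fanLabel m n v) = 1 ↔ v.isLeft := by
  rcases v with i | j <;> simp [fanLabel]

-- The label `{2y + 1}` of the path edge `y(y+1)` and the label `{y, y + 1}` of the edge joining
-- `y % (n + 1)` to `y / (n + 1)` both sum to `2y + 1`.
def fanDecode (S : Finset ℕ) : Sym2 (ℕ ⊕ ℕ) :=
  let y := (∑ z ∈ S, z) / 2
  if #S = 1 then s(.inl y, .inl (y + 1)) else s(.inl (y % (n + 1)), .inr (y / (n + 1)))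

variable {m n}

theorem fanDecode_edgeLabel_fanLabel {e : Sym2 (Fin (n + 1) ⊕ Fin m)}
    (he : e ∈ (graphJoin (pathGraph (n + 1)) ⊥).edgeSet) :
    fanDecode n (edgeLabel (fanLabel m n) e) = Sym2.map (Sum.map Fin.val Fin.val) e := by
  have hcross (i : Fin (n + 1)) (j : Fin m) :
      fanDecode n (fanLabel m n (.inl i) + fanLabel m n (.inr j)) = s(.inl i.val, .inr j.val) := by
    have hi := i.isLt
    simp only [fanDecode, fanLabel, singleton_add_pair_succ, sum_pair_succ, card_pair
      (Nat.succ_ne_self _).symm, OfNat.ofNat_ne_one, if_false]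
    rw [show (2 * (i + (n + 1) * j) + 1) / 2 = i + (n + 1) * j by omega,
      Nat.add_mul_mod_self_left, Nat.mod_eq_of_lt hi, Nat.add_mul_div_left _ _ (Nat.succ_pos n),
      Nat.div_eq_of_lt hi, zero_add]
  induction e using Sym2.ind with
  | _ u v =>
    rcases u with a | a <;> rcases v with b | b
    · have hab : a.val + 1 = b.val ∨ b.val + 1 = a.val := pathGraph_adj.mp he
      simp only [edgeLabel_mk, fanLabel, singleton_add_singleton, fanDecode, card_singleton,
        sum_singleton, if_true, Sym2.map_mk, Sum.map_inl, Sym2.eq_iff, Sum.inl.injEq]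
      omega
    · exact hcross a b
    · rw [edgeLabel_mk, add_comm, hcross, Sym2.map_mk, Sym2.eq_swap]
      rfl
    · exact absurd he id

theorem fanLabel_nonempty (v : Fin (n + 1) ⊕ Fin m) : (fanLabel m n v).Nonempty := by
  rcases v with i | j <;> simp [fanLabel]

theorem fanLabel_injective : Function.Injective (fanLabel m n) := by
  rintro (i | j) (i' | j') h
  · simpa [fanLabel, Fin.ext_iff] using h
  · simpa [fanLabel] using congrArg card h
  · simpa [fanLabel] using congrArg card h
  · have hsum := congrArg (∑ z ∈ ·, z) h
    simp only [fanLabel, sum_pair_succ] at hsum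
    exact congrArg _ (Fin.ext (Nat.eq_of_mul_eq_mul_left (by omega : 0 < n + 1) (by omega)))

theorem fanLabel_isWeakIASI : IsWeakIASI (graphJoin (pathGraph (n + 1)) ⊥) (fanLabel m n) where
  nonempty := fanLabel_nonempty
  inj := fanLabel_injective
  edgeInj e he e' he' h := by
    refine Sym2.map.injective (Sum.map_injective.2 ⟨Fin.val_injective, Fin.val_injective⟩) ?_
    rw [← fanDecode_edgeLabel_fanLabel he, ← fanDecode_edgeLabel_fanLabel he', h]
  weak := by
    rintro (i | j) v h
    · exact card_add_eq_max_of_card_eq_one (card_singleton _) (fanLabel_nonempty v)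
    · rcases v with i | j'
      · rw [add_comm, max_comm]
        exact card_add_eq_max_of_card_eq_one (card_singleton _) (fanLabel_nonempty _)
      · exact absurd h id

theorem monoEdgeCount_fanLabel :
    monoEdgeCount (graphJoin (pathGraph (n + 1)) ⊥) (fanLabel m n) = n := by
  have hmono : {e ∈ (graphJoin (pathGraph (n + 1)) ⊥).edgeSet |
      #(edgeLabel (fanLabel m n) e) = 1} = Sym2.map Sum.inl '' (pathGraph (n + 1)).edgeSet := by
    rw [map_inl_image_edgeSet_graphJoin (H := ⊥)]
    simp_rw [card_edgeLabel_eq_one_iff fanLabel_nonempty, card_fanLabel_eq_one_iff]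
  rw [monoEdgeCount, hmono, Set.ncard_image_of_injective _ (Sym2.map.injective Sum.inl_injective),
    ncard_edgeSet_pathGraph]

end UpperBound

theorem fan_sparingNumber_general (m n : ℕ) (hm : 1 < m) :
    sparingNumber
      (graphJoin (SimpleGraph.pathGraph (n + 1)) (⊥ : SimpleGraph (Fin m))) = n := by
  refine sparingNumber_eq_of_isWeakIASI fanLabel_isWeakIASI monoEdgeCount_fanLabel fun f hf => ?_
  by_cases h : ∃ j, #(f (.inr j)) ≠ 1
  · obtain ⟨j, hj⟩ := h
    simpa [ncard_edgeSet_pathGraph] using ncard_edgeSet_le_monoEdgeCount_graphJoin hf hj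
  · push Not at h
    exact le_monoEdgeCount_pathGraph_graphJoin hf (w₀ := ⟨0, by omega⟩) (w₁ := ⟨1, hm⟩)
      (by simp [Fin.ext_iff]) (h _) (h _)

/-- For integers `m, n > 1`, the sparing number of the `(m,n)`-fan graph
`F_{m,n} = P_n + K̄_m` is `n`. Here `P_n`, the path of length `n` (with `n` edges and
`n+1` vertices), is `SimpleGraph.pathGraph (n+1)`, and `K̄_m` is the edgeless graph on
`m` vertices. -/
theorem fan_sparingNumber (m n : ℕ) (hm : 1 < m) (hn : 1 < n) :
    sparingNumber
      (graphJoin (SimpleGraph.pathGraph (n + 1)) (⊥ : SimpleGraph (Fin m))) = n :=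
  fan_sparingNumber_general m n hm
end

section
/- For an integer m ≥ 1, the sparing number of the m-friendship graph K_1 + mK_2 is m. -/
open Pointwise

/-- The disjoint union `mG` of `m` copies of the graph `G`. -/
def graphCopies {V : Type*} (m : ℕ) (G : SimpleGraph V) : SimpleGraph (Fin m × V) where
  Adj x y := x.1 = y.1 ∧ G.Adj x.2 y.2
  symm := by
    constructor
    rintro ⟨i, u⟩ ⟨j, v⟩ ⟨h1, h2⟩
    exact ⟨h1.symm, G.adj_symm h2⟩
  loopless := by
    constructor
    rintro ⟨i, u⟩ ⟨-, h⟩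
    exact G.irrefl h

/-! In a weak IASI, Cauchy–Davenport `|A + B| ≥ |A| + |B| - 1` forces one endpoint of every edge
to be mono-indexed, and an edge is mono-indexed exactly when both endpoints are. Hence every
triangle of `K_1 + mK_2` has a mono-indexed edge: a spoke if the centre is mono-indexed, its rim
otherwise. Conversely, labelling the centre `{0, 1}` and the outer vertices by distinct
singletons leaves only the `m` rims mono-indexed. -/

section Sumset

variable {α : Type*} [LinearOrder α] [Add α] [IsCancelAdd α] [AddLeftMono α] [AddRightMono α]
  {s t : Finset α}

lemma Finset.card_add_eq_max_iff_s11 (hs : s.Nonempty) (ht : t.Nonempty) :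
    (s + t).card = max s.card t.card ↔ s.card = 1 ∨ t.card = 1 := by
  constructor
  · have := cauchy_davenport_add_of_linearOrder_isCancelAdd hs ht
    have := hs.card_pos
    have := ht.card_pos
    omega
  · rintro (h | h)
    · obtain ⟨a, rfl⟩ := Finset.card_eq_one.mp h
      rw [Finset.card_singleton_add, h]
      exact (max_eq_right ht.card_pos).symm
    · obtain ⟨b, rfl⟩ := Finset.card_eq_one.mp h
      rw [Finset.card_add_singleton, h]
      exact (max_eq_left hs.card_pos).symm

lemma Finset.card_add_eq_one_iff_s11 (hs : s.Nonempty) (ht : t.Nonempty) :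
    (s + t).card = 1 ↔ s.card = 1 ∧ t.card = 1 := by
  have := cauchy_davenport_add_of_linearOrder_isCancelAdd hs ht
  have := hs.card_pos
  have := ht.card_pos
  constructor
  · omega
  · rintro ⟨hs₁, ht₁⟩
    obtain ⟨a, rfl⟩ := Finset.card_eq_one.mp hs₁
    rwa [Finset.card_singleton_add]

end Sumset

lemma pair_add_singleton_injective :
    Function.Injective fun a : ℕ => ({0, 1} : Finset ℕ) + {a} := by
  intro a b h
  have ha := Finset.ext_iff.mp h a
  have hb := Finset.ext_iff.mp h b
  simp [Finset.mem_add] at ha hb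
  omega

section SparingNumber

variable {V : Type*} {G : SimpleGraph V} {f : V → Finset ℕ}

lemma IsWeakIASI.card_eq_one_or_card_eq_one_s11 (hf : IsWeakIASI G f) {u v : V} (huv : G.Adj u v) :
    (f u).card = 1 ∨ (f v).card = 1 :=
  (Finset.card_add_eq_max_iff_s11 (hf.nonempty u) (hf.nonempty v)).mp (hf.weak huv)

lemma IsIASI.card_edgeLabel_mk_eq_one_iff (hf : IsIASI G f) (u v : V) :
    (edgeLabel f s(u, v)).card = 1 ↔ (f u).card = 1 ∧ (f v).card = 1 :=
  Finset.card_add_eq_one_iff_s11 (hf.nonempty u) (hf.nonempty v)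

lemma le_monoEdgeCount_of_injective [Finite V] {ι : Type*} {g : ι → Sym2 V}
    (hg : Function.Injective g)
    (hmono : ∀ i, g i ∈ G.edgeSet ∧ (edgeLabel f (g i)).card = 1) :
    Nat.card ι ≤ monoEdgeCount G f := by
  rw [← Set.ncard_range_of_injective hg]
  exact Set.ncard_le_ncard (Set.range_subset_iff.mpr hmono)

lemma monoEdgeCount_le_of_subset_range [Finite V] {ι : Type*} {g : ι → Sym2 V}
    (hg : Function.Injective g)
    (hmono : {e ∈ G.edgeSet | (edgeLabel f e).card = 1} ⊆ Set.range g) :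
    monoEdgeCount G f ≤ Nat.card ι := by
  rw [← Set.ncard_range_of_injective hg]
  exact Set.ncard_le_ncard hmono

lemma sparingNumber_le (hf : IsWeakIASI G f) : sparingNumber G ≤ monoEdgeCount G f :=
  Nat.sInf_le ⟨f, hf, rfl⟩

lemma le_sparingNumber {k : ℕ} (hG : ∃ f, IsWeakIASI G f)
    (h : ∀ f, IsWeakIASI G f → k ≤ monoEdgeCount G f) : k ≤ sparingNumber G := by
  obtain ⟨f, hf⟩ := hG
  refine le_csInf ⟨_, f, hf, rfl⟩ ?_
  rintro _ ⟨f, hf, rfl⟩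
  exact h f hf

end SparingNumber

abbrev friendshipGraph (m : ℕ) : SimpleGraph (Fin 1 ⊕ Fin m × Fin 2) :=
  graphJoin (⊥ : SimpleGraph (Fin 1)) (graphCopies m (⊤ : SimpleGraph (Fin 2)))

namespace friendshipGraph

variable {m : ℕ}

def spoke (v : Fin m × Fin 2) : Sym2 (Fin 1 ⊕ Fin m × Fin 2) := s(.inl 0, .inr v)

def rim (i : Fin m) : Sym2 (Fin 1 ⊕ Fin m × Fin 2) := s(.inr (i, 0), .inr (i, 1))

lemma spoke_injective : Function.Injective (spoke (m := m)) := by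
  intro v w h
  simpa [spoke] using h

lemma rim_injective : Function.Injective (rim (m := m)) := by
  intro i j h
  simpa [rim] using h

lemma edgeSet_eq : (friendshipGraph m).edgeSet = Set.range spoke ∪ Set.range rim := by
  ext e
  induction e using Sym2.ind with
  | _ x y =>
  rcases x with a | ⟨i, t⟩ <;> rcases y with b | ⟨j, s⟩ <;>
    simp [graphJoin, graphCopies, spoke, rim, Subsingleton.elim _ (0 : Fin 1)]
  fin_cases t <;> fin_cases s <;> simp [eq_comm]

lemma spoke_mem_edgeSet (v : Fin m × Fin 2) : spoke v ∈ (friendshipGraph m).edgeSet :=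
  edgeSet_eq ▸ Or.inl ⟨v, rfl⟩

lemma rim_mem_edgeSet (i : Fin m) : rim i ∈ (friendshipGraph m).edgeSet :=
  edgeSet_eq ▸ Or.inr ⟨i, rfl⟩

-- `finProdFinEquiv (i, t) = 2 * i + t`, so the outer vertices get distinct singletons.
def label : Fin 1 ⊕ Fin m × Fin 2 → Finset ℕ
  | .inl _ => {0, 1}
  | .inr v => {(finProdFinEquiv v : ℕ)}

lemma card_label_inl (a : Fin 1) : (label (.inl a : Fin 1 ⊕ Fin m × Fin 2)).card = 2 := by
  simp [label]

lemma card_label_inr (v : Fin m × Fin 2) : (label (.inr v)).card = 1 := by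
  simp [label]

lemma label_nonempty (x : Fin 1 ⊕ Fin m × Fin 2) : (label x).Nonempty := by
  cases x <;> simp [label]


lemma edgeLabel_spoke (v : Fin m × Fin 2) :
    edgeLabel label (spoke v) = {0, 1} + {(finProdFinEquiv v : ℕ)} := rfl

lemma edgeLabel_rim (i : Fin m) : edgeLabel label (rim i) = {4 * (i : ℕ) + 1} := by
  simp only [rim, edgeLabel, Sym2.lift_mk, label, Finset.singleton_add_singleton]
  congr 1
  simp
  omega

lemma card_edgeLabel_spoke (v : Fin m × Fin 2) : (edgeLabel label (spoke v)).card = 2 := by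
  simp [spoke, edgeLabel, label]

lemma isWeakIASI_label : IsWeakIASI (friendshipGraph m) label where
  nonempty := label_nonempty
  inj := by
    rintro (a | v) (b | w) h
    · rw [Subsingleton.elim a b]
    · simpa [card_label_inl, card_label_inr] using congrArg Finset.card h
    · simpa [card_label_inl, card_label_inr] using congrArg Finset.card h
    · simp only [label, Finset.singleton_inj, Fin.val_inj, finProdFinEquiv.apply_eq_iff_eq] at h
      rw [h]
  edgeInj := by
    rw [edgeSet_eq]
    rintro _ (⟨v, rfl⟩ | ⟨i, rfl⟩) _ (⟨w, rfl⟩ | ⟨j, rfl⟩) h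
    · rw [edgeLabel_spoke, edgeLabel_spoke, pair_add_singleton_injective.eq_iff,
        Fin.val_inj, finProdFinEquiv.apply_eq_iff_eq] at h
      rw [h]
    · simpa [card_edgeLabel_spoke, edgeLabel_rim] using congrArg Finset.card h
    · simpa [card_edgeLabel_spoke, edgeLabel_rim] using congrArg Finset.card h
    · rw [edgeLabel_rim, edgeLabel_rim, Finset.singleton_inj] at h
      rw [show i = j from Fin.ext (by omega)]
  weak := by
    intro x y hxy
    refine (Finset.card_add_eq_max_iff_s11 (label_nonempty x) (label_nonempty y)).mpr ?_
    rcases x with a | v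
    · rcases y with b | w
      · exact hxy.elim
      · exact .inr (card_label_inr w)
    · exact .inl (card_label_inr v)

lemma monoEdgeCount_label_le : monoEdgeCount (friendshipGraph m) label ≤ m := by
  have hmono : {e ∈ (friendshipGraph m).edgeSet | (edgeLabel label e).card = 1} ⊆
      Set.range rim := by
    rintro _ ⟨he, hcard⟩
    rw [edgeSet_eq] at he
    rcases he with ⟨v, rfl⟩ | hrim
    · simp [card_edgeLabel_spoke] at hcard
    · exact hrim
  simpa using monoEdgeCount_le_of_subset_range rim_injective hmono

lemma le_monoEdgeCount {f : Fin 1 ⊕ Fin m × Fin 2 → Finset ℕ}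
    (hf : IsWeakIASI (friendshipGraph m) f) : m ≤ monoEdgeCount (friendshipGraph m) f := by
  by_cases hcenter : (f (.inl 0)).card = 1
  · have hrim (i : Fin m) : ∃ t, (f (.inr (i, t))).card = 1 :=
      (hf.card_eq_one_or_card_eq_one_s11 ((SimpleGraph.mem_edgeSet _).mp (rim_mem_edgeSet i))).elim
        (⟨0, ·⟩) (⟨1, ·⟩)
    choose t ht using hrim
    have hinj : Function.Injective fun i => spoke (i, t i) :=
      spoke_injective.comp fun i j h => congrArg Prod.fst h
    simpa using le_monoEdgeCount_of_injective hinj fun i =>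
      ⟨spoke_mem_edgeSet _, (hf.card_edgeLabel_mk_eq_one_iff _ _).mpr ⟨hcenter, ht i⟩⟩
  · have houter (v : Fin m × Fin 2) : (f (.inr v)).card = 1 :=
      (hf.card_eq_one_or_card_eq_one_s11
        ((SimpleGraph.mem_edgeSet _).mp (spoke_mem_edgeSet v))).resolve_left hcenter
    simpa using le_monoEdgeCount_of_injective rim_injective fun i =>
      ⟨rim_mem_edgeSet i, (hf.card_edgeLabel_mk_eq_one_iff _ _).mpr ⟨houter _, houter _⟩⟩

end friendshipGraph

theorem friendship_sparingNumber_general (m : ℕ) :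
    sparingNumber
      (graphJoin (⊥ : SimpleGraph (Fin 1))
        (graphCopies m (⊤ : SimpleGraph (Fin 2)))) = m :=
  le_antisymm
    ((sparingNumber_le friendshipGraph.isWeakIASI_label).trans
      friendshipGraph.monoEdgeCount_label_le)
    (le_sparingNumber ⟨_, friendshipGraph.isWeakIASI_label⟩
      fun _ => friendshipGraph.le_monoEdgeCount)

/-- For `m ≥ 1`, the sparing number of the `m`-friendship graph `K_1 + mK_2` is `m`. -/
theorem friendship_sparingNumber (m : ℕ) (hm : 1 ≤ m) :
    sparingNumber
      (graphJoin (⊥ : SimpleGraph (Fin 1))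
        (graphCopies m (⊤ : SimpleGraph (Fin 2)))) = m :=
  friendship_sparingNumber_general m
end
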